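/- Suppose the parameters are in Case 1 or Case 2 and β ∈ 𝓓. Then lim_{x→∞} v_β(x) = −∞. -/

import Mathlib

/-!
On `[x_β, ∞)` the solution decreases, so it tends either to `-∞` or to a finite limit `L`.
Write the equation as `(σ²/2) v' = Q(v) + y (η v - h)` with `Q(t) = β + (α̂/4) t² - a t`.
If `η L ≠ h`, the drift `y (η v - h)` drives `v'` to `±∞`, which is impossible for a decreasing
function with a finite limit. So `η L = h`, and then `v > L`, `v' ≤ 0` on `[x_β, ∞)` give
`Q(L) ≤ 0` and `Q(v(x_β)) ≤ 0`. Since `Q` is convex and `Q(-r) > 0` (this is exactly what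
Case 1 or Case 2 provides), `-r < L`. Hence `v` crosses the level `L` on `[0, x_β)` at a point
where `v' ≥ 0`, which forces `Q(L) ≥ 0`. But then
`(σ²/2) v' = Q(L) + (v - L) (α̂ (v + L)/4 - a + η y)` is eventually positive, a contradiction.
-/

open Set Filter Topology

noncomputable section

/-- `IsIVP σ η αh h r a β v v'` says that `v : [0,∞) → ℝ` is a C¹ solution
(with derivative `v'`) of the initial value problem IVP(β):
`(σ²/2)·v′(y) = β + (αh/4)·v(y)² + η·y·(v(y) − h/η) − a·v(y)` for `y ≥ 0`, `v(0) = −r`. -/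
def IsIVP (σ η αh h r a β : ℝ) (v v' : ℝ → ℝ) : Prop :=
  ContinuousOn v' (Set.Ici 0) ∧
  (∀ y ∈ Set.Ici (0:ℝ), HasDerivWithinAt v (v' y) (Set.Ici 0) y) ∧
  (∀ y ∈ Set.Ici (0:ℝ),
    σ ^ 2 / 2 * v' y = β + αh / 4 * (v y) ^ 2 + η * y * (v y - h / η) - a * v y) ∧
  v 0 = -r

lemma StrictAntiOn.tendsto_atBot_or_tendsto_nhds {α β : Type*} [LinearOrder α] [NoMaxOrder α]
    [ConditionallyCompleteLinearOrder β] [TopologicalSpace β] [OrderTopology β]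
    {f : α → β} {a : α} (hf : StrictAntiOn f (Ici a)) :
    Tendsto f atTop atBot ∨ ∃ L, Tendsto f atTop (𝓝 L) ∧ ∀ y ∈ Ici a, L < f y := by
  have hg : Antitone fun y => f (max y a) := fun y z hyz =>
    hf.antitoneOn (le_max_right y a) (le_max_right z a) (max_le_max_right a hyz)
  have hfg : (fun y => f (max y a)) =ᶠ[atTop] f := by
    filter_upwards [eventually_ge_atTop a] with y hy
    rw [max_eq_left hy]
  refine (tendsto_atTop_of_antitone hg).imp (fun h => h.congr' hfg) ?_
  rintro ⟨L, hL⟩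
  refine ⟨L, hL.congr' hfg, fun y hy => ?_⟩
  obtain ⟨z, hyz⟩ := exists_gt y
  calc L ≤ f (max z a) := hg.le_of_tendsto hL z
    _ = f z := by rw [max_eq_left (le_trans hy hyz.le)]
    _ < f y := hf hy (le_trans hy hyz.le) hyz

lemma tendsto_atBot_of_hasDerivAt_of_tendsto_atBot {f f' : ℝ → ℝ}
    (hf : ∀ᶠ x in atTop, HasDerivAt f (f' x) x) (hf' : Tendsto f' atTop atBot) :
    Tendsto f atTop atBot := by
  obtain ⟨Y, hY⟩ := eventually_atTop.1 (hf.and (hf'.eventually_le_atBot (-1)))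
  have hdecay : ∀ x ∈ Ici Y, f x - f Y ≤ -1 * (x - Y) := by
    refine fun x hx =>
      (convex_Ici Y).image_sub_le_mul_sub_of_deriv_le ?_ ?_ ?_ Y self_mem_Ici x hx hx
    · exact fun x hx => (hY x hx).1.continuousAt.continuousWithinAt
    · exact fun x hx => (hY x (interior_subset hx)).1.differentiableAt.differentiableWithinAt
    · intro x hx
      rw [(hY x (interior_subset hx)).1.deriv]
      exact (hY x (interior_subset hx)).2
  refine tendsto_atBot_mono' atTop ?_
    (tendsto_atBot_add_const_left atTop (f Y + Y) tendsto_neg_atTop_atBot)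
  filter_upwards [eventually_ge_atTop Y] with x hx
  linarith [hdecay x hx]

lemma accPt_Icc_left {a b : ℝ} (hab : a < b) : AccPt a (𝓟 (Icc a b)) :=
  uniqueDiffWithinAt_iff_accPt.mp (uniqueDiffOn_Icc hab a (left_mem_Icc.2 hab.le))

def ivpQuadratic (αh a β t : ℝ) : ℝ := β + αh / 4 * t ^ 2 - a * t

section ivpQuadratic

variable {αh a β : ℝ}

lemma continuous_ivpQuadratic : Continuous (ivpQuadratic αh a β) := by
  unfold ivpQuadratic
  fun_prop

lemma ivpQuadratic_sub (s t : ℝ) :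
    ivpQuadratic αh a β s - ivpQuadratic αh a β t = (s - t) * (αh / 4 * (s + t) - a) := by
  unfold ivpQuadratic
  ring

lemma ivpQuadratic_nonpos_of_mem_Icc (hαh : 0 ≤ αh) {L M t : ℝ}
    (hL : ivpQuadratic αh a β L ≤ 0) (hM : ivpQuadratic αh a β M ≤ 0) (ht : t ∈ Icc L M) :
    ivpQuadratic αh a β t ≤ 0 := by
  obtain ⟨hLt, htM⟩ := ht
  rcases hLt.eq_or_lt with rfl | hLt
  · exact hL
  have hLM : 0 < M - L := by linarith
  have hinterp : (M - L) * ivpQuadratic αh a β t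
      = (M - t) * ivpQuadratic αh a β L + (t - L) * ivpQuadratic αh a β M
        - αh / 4 * (M - L) * (t - L) * (M - t) := by
    unfold ivpQuadratic
    ring
  have hcurv : 0 ≤ αh / 4 * (M - L) * (t - L) * (M - t) :=
    mul_nonneg (mul_nonneg (mul_nonneg (by positivity) hLM.le) (sub_nonneg.2 hLt.le))
      (sub_nonneg.2 htM)
  refine nonpos_of_mul_nonpos_right ?_ hLM
  rw [hinterp]
  nlinarith [mul_nonpos_of_nonneg_of_nonpos (sub_nonneg.2 htM) hL,
    mul_nonpos_of_nonneg_of_nonpos (sub_nonneg.2 hLt.le) hM]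

lemma ivpQuadratic_neg_pos {r : ℝ} (hr : 0 < r)
    (hcase : (-(αh / 4) * r < a ∧ 0 ≤ β) ∨ (a ≤ -(αh / 4) * r ∧ -a * r - αh / 4 * r ^ 2 < β)) :
    0 < ivpQuadratic αh a β (-r) := by
  unfold ivpQuadratic
  rcases hcase with ⟨ha, hβ⟩ | ⟨-, hβ⟩
  · nlinarith
  · linarith

end ivpQuadratic

namespace IsIVP

variable {σ η αh h r a β : ℝ} {v v' : ℝ → ℝ}

lemma hasDerivWithinAt (hv : IsIVP σ η αh h r a β v v') {y : ℝ} (hy : 0 ≤ y) :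
    HasDerivWithinAt v (v' y) (Ici 0) y :=
  hv.2.1 y hy

lemma initial (hv : IsIVP σ η αh h r a β v v') : v 0 = -r :=
  hv.2.2.2

lemma ode (hv : IsIVP σ η αh h r a β v v') (hη : η ≠ 0) {y : ℝ} (hy : 0 ≤ y) :
    σ ^ 2 / 2 * v' y = ivpQuadratic αh a β (v y) + y * (η * v y - h) := by
  rw [hv.2.2.1 y hy, ivpQuadratic]
  field_simp
  ring

lemma continuousOn (hv : IsIVP σ η αh h r a β v v') : ContinuousOn v (Ici 0) :=
  fun _ hy => (hv.hasDerivWithinAt hy).continuousWithinAt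

lemma hasDerivAt (hv : IsIVP σ η αh h r a β v v') {y : ℝ} (hy : 0 < y) :
    HasDerivAt v (v' y) y :=
  (hv.hasDerivWithinAt hy.le).hasDerivAt (Ici_mem_nhds hy)

lemma deriv_nonpos_of_antitoneOn (hv : IsIVP σ η αh h r a β v v') {x₀ y : ℝ} (hx₀ : 0 ≤ x₀)
    (hy : x₀ ≤ y) (hanti : AntitoneOn v (Ici x₀)) : v' y ≤ 0 := by
  have hIcc : Icc y (y + 1) ⊆ Ici x₀ := Icc_subset_Ici_self.trans (Ici_subset_Ici.2 hy)
  exact ((hv.hasDerivWithinAt (hx₀.trans hy)).mono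
    (hIcc.trans (Ici_subset_Ici.2 hx₀))).nonpos_of_antitoneOn
      (accPt_Icc_left (lt_add_one y)) (hanti.mono hIcc)

lemma deriv_nonneg_of_monotoneOn (hv : IsIVP σ η αh h r a β v v') {y c : ℝ} (hy : 0 ≤ y)
    (hyc : y < c) (hmono : MonotoneOn v (Icc y c)) : 0 ≤ v' y :=
  ((hv.hasDerivWithinAt hy).mono
    (Icc_subset_Ici_self.trans (Ici_subset_Ici.2 hy))).nonneg_of_monotoneOn
      (accPt_Icc_left hyc) hmono

lemma tendsto_ode_sub (hv : IsIVP σ η αh h r a β v v') (hη : η ≠ 0) {L : ℝ}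
    (hL : Tendsto v atTop (𝓝 L)) :
    Tendsto (fun y => σ ^ 2 / 2 * v' y - y * (η * v y - h)) atTop
      (𝓝 (ivpQuadratic αh a β L)) := by
  refine ((continuous_ivpQuadratic.tendsto L).comp hL).congr' ?_
  filter_upwards [eventually_ge_atTop 0] with y hy
  simp [hv.ode hη hy]

lemma mul_eq_of_tendsto (hv : IsIVP σ η αh h r a β v v') (hσ : σ ≠ 0) (hη : η ≠ 0) {L : ℝ}
    (hL : Tendsto v atTop (𝓝 L)) (hv' : ∀ᶠ y in atTop, v' y ≤ 0) : η * L = h := by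
  have hσ2 : 0 < σ ^ 2 / 2 := by positivity
  have hdrift := (hL.const_mul η).sub_const h
  rcases lt_trichotomy (η * L) h with hlt | heq | hgt
  · have hscaled : Tendsto (fun y => σ ^ 2 / 2 * v' y) atTop atBot := by
      simpa using (hv.tendsto_ode_sub hη hL).add_atBot
        (tendsto_id.atTop_mul_neg (sub_neg.2 hlt) hdrift)
    have hv'bot : Tendsto v' atTop atBot := by
      simpa only [inv_mul_cancel_left₀ hσ2.ne'] using hscaled.const_mul_atBot (inv_pos.2 hσ2)
    exact absurd hL (not_tendsto_nhds_of_tendsto_atBot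
      (tendsto_atBot_of_hasDerivAt_of_tendsto_atBot
        ((eventually_gt_atTop 0).mono fun y hy => hv.hasDerivAt hy) hv'bot) L)
  · exact heq
  · have hscaled : Tendsto (fun y => σ ^ 2 / 2 * v' y) atTop atTop := by
      simpa using (hv.tendsto_ode_sub hη hL).add_atTop
        (tendsto_id.atTop_mul_pos (sub_pos.2 hgt) hdrift)
    obtain ⟨y, hpos, hnonpos⟩ := ((hscaled.eventually_gt_atTop 0).and hv').exists
    nlinarith

lemma ivpQuadratic_nonpos_of_deriv_nonpos (hv : IsIVP σ η αh h r a β v v') (hη : 0 < η)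
    {L y : ℝ} (hLh : η * L = h) (hy : 0 ≤ y) (hv' : v' y ≤ 0) (hLv : L ≤ v y) :
    ivpQuadratic αh a β (v y) ≤ 0 := by
  have hv'y : σ ^ 2 / 2 * v' y ≤ 0 := mul_nonpos_of_nonneg_of_nonpos (by positivity) hv'
  have hdrift : 0 ≤ y * (η * v y - h) := by
    rw [← hLh, ← mul_sub]
    have := sub_nonneg.2 hLv
    positivity
  linarith [hv.ode hη.ne' hy]

lemma ivpQuadratic_nonneg_of_mem_Ioo (hv : IsIVP σ η αh h r a β v v') (hη : η ≠ 0)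
    {L x₀ : ℝ} (hLh : η * L = h) (hx₀ : 0 ≤ x₀) (hmono : MonotoneOn v (Icc 0 x₀))
    (hL : L ∈ Ioo (-r) (v x₀)) :
    0 ≤ ivpQuadratic αh a β L := by
  obtain ⟨y₀, hy₀, hvy₀⟩ : L ∈ v '' Icc 0 x₀ :=
    intermediate_value_Icc hx₀ (hv.continuousOn.mono Icc_subset_Ici_self)
      ⟨hv.initial ▸ hL.1.le, hL.2.le⟩
  have hy₀x₀ : y₀ < x₀ := hy₀.2.lt_of_ne (by rintro rfl; exact hL.2.ne hvy₀.symm)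
  have hv'y₀ : 0 ≤ v' y₀ :=
    hv.deriv_nonneg_of_monotoneOn hy₀.1 hy₀x₀ (hmono.mono (Icc_subset_Icc hy₀.1 le_rfl))
  have hode := hv.ode hη hy₀.1
  rw [hvy₀, hLh, sub_self, mul_zero, add_zero] at hode
  rw [← hode]
  positivity

lemma eventually_deriv_pos (hv : IsIVP σ η αh h r a β v v') (hσ : σ ≠ 0) (hη : 0 < η) {L : ℝ}
    (hL : Tendsto v atTop (𝓝 L)) (hLh : η * L = h) (hQL : 0 ≤ ivpQuadratic αh a β L)
    (hLv : ∀ᶠ y in atTop, L < v y) :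
    ∀ᶠ y in atTop, 0 < v' y := by
  have hfactor : Tendsto (fun y => αh / 4 * (v y + L) - a + η * y) atTop atTop :=
    (((hL.add_const L).const_mul (αh / 4)).sub_const a).add_atTop
      (tendsto_id.const_mul_atTop hη)
  filter_upwards [hfactor.eventually_gt_atTop 0, hLv, eventually_ge_atTop 0] with y hfy hvy hy
  have hode : σ ^ 2 / 2 * v' y
      = ivpQuadratic αh a β L + (v y - L) * (αh / 4 * (v y + L) - a + η * y) := by
    rw [hv.ode hη.ne' hy, ← hLh]
    linear_combination ivpQuadratic_sub (αh := αh) (a := a) (β := β) (v y) L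
  have hpos : 0 < σ ^ 2 / 2 * v' y := by
    rw [hode]
    exact add_pos_of_nonneg_of_pos hQL (mul_pos (sub_pos.2 hvy) hfy)
  exact pos_of_mul_pos_right hpos (by positivity)

end IsIVP

theorem stmt_8_general (σ η αh h r a β : ℝ) (hσ : 0 < σ) (hη : 0 < η) (hαh : 0 < αh)
    (hr : 0 < r)
    (hcase : (-(αh / 4) * r < a ∧ 0 ≤ β) ∨
      (a ≤ -(αh / 4) * r ∧ -a * r - αh / 4 * r ^ 2 < β))
    (v v' : ℝ → ℝ) (hIVP : IsIVP σ η αh h r a β v v')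
    (hD : ∃ xβ, 0 ≤ xβ ∧ MonotoneOn v (Set.Icc 0 xβ) ∧ StrictAntiOn v (Set.Ici xβ)) :
    Tendsto v atTop atBot := by
  obtain ⟨xβ, hxβ, hmono, hanti⟩ := hD
  have hv' : ∀ y ∈ Ici xβ, v' y ≤ 0 := fun y hy =>
    hIVP.deriv_nonpos_of_antitoneOn hxβ hy hanti.antitoneOn
  refine hanti.tendsto_atBot_or_tendsto_nhds.resolve_right ?_
  rintro ⟨L, hL, hLv⟩
  have hLh : η * L = h := hIVP.mul_eq_of_tendsto hσ.ne' hη.ne' hL (eventually_atTop.2 ⟨xβ, hv'⟩)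
  have hQv : ∀ y ∈ Ici xβ, ivpQuadratic αh a β (v y) ≤ 0 := fun y hy =>
    hIVP.ivpQuadratic_nonpos_of_deriv_nonpos hη hLh (hxβ.trans hy) (hv' y hy) (hLv y hy).le
  have hQL : ivpQuadratic αh a β L ≤ 0 :=
    le_of_tendsto ((continuous_ivpQuadratic.tendsto L).comp hL) (eventually_atTop.2 ⟨xβ, hQv⟩)
  have hrL : -r < L := by
    by_contra! hLr
    have hrxβ : -r ≤ v xβ := hIVP.initial ▸ hmono (left_mem_Icc.2 hxβ) (right_mem_Icc.2 hxβ) hxβ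
    exact (ivpQuadratic_neg_pos hr hcase).not_ge
      (ivpQuadratic_nonpos_of_mem_Icc hαh.le hQL (hQv xβ self_mem_Ici) ⟨hLr, hrxβ⟩)
  have hQL' : 0 ≤ ivpQuadratic αh a β L :=
    hIVP.ivpQuadratic_nonneg_of_mem_Ioo hη.ne' hLh hxβ hmono ⟨hrL, hLv xβ self_mem_Ici⟩
  obtain ⟨y, hy, hyv'⟩ := ((hIVP.eventually_deriv_pos hσ.ne' hη hL hLh hQL'
    (eventually_atTop.2 ⟨xβ, hLv⟩)).and (eventually_atTop.2 ⟨xβ, hv'⟩)).exists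
  exact hy.not_ge hyv'

/-- In Case 1 or Case 2, if `β ∈ 𝓓` then `v_β(x) → −∞` as `x → ∞`. -/
theorem stmt_8 (σ η αh h r a β : ℝ) (hσ : 0 < σ) (hη : 0 < η) (hαh : 0 < αh)
    (hh : 0 < h) (hr : 0 < r)
    (hcase : (-(αh / 4) * r < a ∧ 0 ≤ β) ∨
      (a ≤ -(αh / 4) * r ∧ -a * r - αh / 4 * r ^ 2 < β))
    (v v' : ℝ → ℝ) (hIVP : IsIVP σ η αh h r a β v v')
    (hD : ∃ xβ, 0 ≤ xβ ∧ MonotoneOn v (Set.Icc 0 xβ) ∧ StrictAntiOn v (Set.Ici xβ)) :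
    Tendsto v atTop atBot :=
  stmt_8_general σ η αh h r a β hσ hη hαh hr hcase v v' hIVP hD
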